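/- Let p be a real polynomial such that p(x) > 0 for all x ∈ (0,1). Then there exists an integer d_0 ≥ deg(p) such that for all d ≥ d_0 and all 0 ≤ k ≤ d, the Bernstein coefficient β_{k,d}(p) is nonnegative. -/

import Mathlib

/-!
Peeling off the roots at `0` and `1` writes `p = X ^ a * (1 - X) ^ b * q` with `q > 0` on
`[0, 1]`. Multiplying by `X` or by `1 - X` raises the degree by one and keeps the Bernstein
coefficients nonnegative, so it suffices to treat `q`. From `x ^ i = ∑ₖ (k)ᵢ / (d)ᵢ · b_{k,d}(x)`
the coefficients of `q` in degree `d` are `∑ᵢ qᵢ (k)ᵢ / (d)ᵢ`; since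
`(k)ᵢ / (d)ᵢ = (k / d) ^ i + O(1 / d)`, they differ from `q (k / d)` by `O(1 / d)` uniformly in
`k`, and are therefore positive once `d` is large compared to `1 / min q`.
-/

open Polynomial Finset Filter Topology

theorem Finset.norm_prod_sub_prod_le_sum {ι R : Type*} [NormedCommRing R] [NormOneClass R]
    (s : Finset ι) {a b : ι → R} (ha : ∀ i ∈ s, ‖a i‖ ≤ 1) (hb : ∀ i ∈ s, ‖b i‖ ≤ 1) :
    ‖∏ i ∈ s, a i - ∏ i ∈ s, b i‖ ≤ ∑ i ∈ s, ‖a i - b i‖ := by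
  classical
  induction s using Finset.induction_on with
  | empty => simp
  | insert j s hj ih =>
    simp only [forall_mem_insert] at ha hb
    rw [prod_insert hj, prod_insert hj, sum_insert hj]
    have hprod : ‖∏ i ∈ s, b i‖ ≤ 1 :=
      (norm_prod_le s b).trans (prod_le_one (fun _ _ => norm_nonneg _) hb.2)
    calc ‖a j * ∏ i ∈ s, a i - b j * ∏ i ∈ s, b i‖
        = ‖a j * (∏ i ∈ s, a i - ∏ i ∈ s, b i) + (a j - b j) * ∏ i ∈ s, b i‖ := by ring_nf
      _ ≤ ‖a j‖ * ‖∏ i ∈ s, a i - ∏ i ∈ s, b i‖ + ‖a j - b j‖ * ‖∏ i ∈ s, b i‖ :=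
        (norm_add_le _ _).trans (add_le_add (norm_mul_le _ _) (norm_mul_le _ _))
      _ ≤ 1 * ∑ i ∈ s, ‖a i - b i‖ + ‖a j - b j‖ * 1 := by
        gcongr
        · exact ha.1
        · exact ih ha.2 hb.2
      _ = ‖a j - b j‖ + ∑ i ∈ s, ‖a i - b i‖ := by ring

theorem X_pow_mul_bernsteinPolynomial (i m j : ℕ) :
    X ^ i * bernsteinPolynomial ℝ m j =
      C (((i + j).descFactorial i : ℝ) / (i + m).descFactorial i) *
        bernsteinPolynomial ℝ (i + m) (i + j) := by
  have hchoose : (i + m).choose (i + j) * (i + j).descFactorial i =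
      m.choose j * (i + m).descFactorial i := by
    simp only [Nat.descFactorial_eq_factorial_mul_choose]
    rw [mul_left_comm, Nat.choose_mul (Nat.le_add_right i j)]
    simp only [Nat.add_sub_cancel_left]
    ring
  have hcoeff : ((i + j).descFactorial i : ℝ) / (i + m).descFactorial i * (i + m).choose (i + j)
      = m.choose j := by
    have : 0 < (i + m).descFactorial i := Nat.descFactorial_pos.2 (by omega)
    rw [div_mul_eq_mul_div, div_eq_iff (by positivity), mul_comm]
    exact_mod_cast hchoose
  simp only [bernsteinPolynomial, Nat.add_sub_add_left, pow_add, ← C_eq_natCast, ← hcoeff, C_mul]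
  ring

theorem X_mul_bernsteinPolynomial (d k : ℕ) :
    X * bernsteinPolynomial ℝ d k =
      C (((k : ℝ) + 1) / (d + 1)) * bernsteinPolynomial ℝ (d + 1) (k + 1) := by
  simpa [add_comm] using X_pow_mul_bernsteinPolynomial 1 d k

theorem one_sub_X_mul_bernsteinPolynomial {d k : ℕ} (hk : k ≤ d) :
    (1 - X) * bernsteinPolynomial ℝ d k =
      C (((d : ℝ) + 1 - k) / (d + 1)) * bernsteinPolynomial ℝ (d + 1) k := by
  have hcoeff : ((d : ℝ) + 1 - k) / (d + 1) * (d + 1).choose k = d.choose k := by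
    rw [div_mul_eq_mul_div, div_eq_iff (by positivity)]
    have := congrArg (Nat.cast : ℕ → ℝ) (Nat.choose_mul_succ_eq d k)
    push_cast [Nat.cast_sub (Nat.le_succ_of_le hk)] at this
    linear_combination -this
  simp only [bernsteinPolynomial, Nat.sub_add_comm hk, pow_succ, ← C_eq_natCast, ← hcoeff, C_mul]
  ring

theorem sum_descFactorial_div_mul_bernsteinPolynomial {i d : ℕ} (h : i ≤ d) :
    ∑ k ∈ range (d + 1), C ((k.descFactorial i : ℝ) / d.descFactorial i) *
      bernsteinPolynomial ℝ d k = X ^ i := by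
  obtain ⟨m, rfl⟩ := Nat.exists_eq_add_of_le h
  rw [add_assoc, sum_range_add, sum_eq_zero fun k hk => by
    simp [Nat.descFactorial_eq_zero_iff_lt.2 (mem_range.1 hk)], zero_add]
  simp only [← X_pow_mul_bernsteinPolynomial, ← mul_sum, bernsteinPolynomial.sum, mul_one]

theorem abs_div_sub_sub_div_sub_le {k d j : ℕ} (hk : k ≤ d) (hj : j < d) :
    |(k : ℝ) / d - ((k - j : ℕ) : ℝ) / (d - j : ℕ)| ≤ j / (d - j) := by
  have hdj : (0 : ℝ) < d - j := sub_pos.2 (by exact_mod_cast hj)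
  have hd : (0 : ℝ) < d := by exact_mod_cast (Nat.zero_le j).trans_lt hj
  have hkd : (k : ℝ) ≤ d := by exact_mod_cast hk
  rw [Nat.cast_sub hj.le]
  rcases le_total j k with hjk | hkj
  · have hkd' : 0 ≤ ((d : ℝ) - k) / d := div_nonneg (by linarith) hd.le
    have key : (k : ℝ) / d - (k - j) / (d - j) = j / (d - j) * ((d - k) / d) := by
      field_simp
      ring
    rw [Nat.cast_sub hjk, key, abs_of_nonneg (by positivity)]
    exact mul_le_of_le_one_right (by positivity) ((div_le_one hd).2 (by simp))
  · rw [Nat.sub_eq_zero_of_le hkj, Nat.cast_zero, zero_div, sub_zero, abs_of_nonneg (by positivity)]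
    have : (k : ℝ) ≤ j := by exact_mod_cast hkj
    calc (k : ℝ) / d ≤ j / d := by gcongr
      _ ≤ j / (d - j) := by gcongr; exact sub_le_self _ (Nat.cast_nonneg j)

theorem abs_descFactorial_div_sub_pow_le {k d i : ℕ} (hk : k ≤ d) (hi : i < d) :
    |(k.descFactorial i : ℝ) / d.descFactorial i - ((k : ℝ) / d) ^ i| ≤ i * i / (d - i) := by
  have hdi : (0 : ℝ) < d - i := sub_pos.2 (by exact_mod_cast hi)
  have hprod : (k.descFactorial i : ℝ) / d.descFactorial i =
      ∏ j ∈ range i, ((k - j : ℕ) : ℝ) / (d - j : ℕ) := by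
    simp only [Nat.descFactorial_eq_prod_range, Nat.cast_prod, prod_div_distrib]
  have hpow : ((k : ℝ) / d) ^ i = ∏ _j ∈ range i, (k : ℝ) / d := by
    rw [prod_const, card_range]
  have hkd : |(k : ℝ) / d| ≤ 1 := by
    rw [abs_of_nonneg (by positivity)]
    exact div_le_one_of_le₀ (by exact_mod_cast hk) (Nat.cast_nonneg d)
  have hfactor : ∀ j ∈ range i, |((k - j : ℕ) : ℝ) / (d - j : ℕ)| ≤ 1 := fun j _ => by
    rw [abs_of_nonneg (by positivity)]
    exact div_le_one_of_le₀ (by exact_mod_cast Nat.sub_le_sub_right hk j) (Nat.cast_nonneg _)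
  rw [hprod, hpow, abs_sub_comm]
  calc |∏ _j ∈ range i, (k : ℝ) / d - ∏ j ∈ range i, ((k - j : ℕ) : ℝ) / (d - j : ℕ)|
      ≤ ∑ j ∈ range i, |(k : ℝ) / d - ((k - j : ℕ) : ℝ) / (d - j : ℕ)| := by
        simp only [← Real.norm_eq_abs] at hkd hfactor ⊢
        exact norm_prod_sub_prod_le_sum (range i) (fun _ _ => hkd) hfactor
    _ ≤ ∑ _j ∈ range i, (i : ℝ) / (d - i) := sum_le_sum fun j hj => by
        have hji : j < i := mem_range.1 hj
        refine (abs_div_sub_sub_div_sub_le hk (hji.trans hi)).trans ?_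
        have : (j : ℝ) ≤ i := by exact_mod_cast hji.le
        gcongr
    _ = i * i / (d - i) := by simp [mul_div_assoc]

noncomputable def bernsteinCoeff (q : ℝ[X]) (d k : ℕ) : ℝ :=
  ∑ i ∈ range (q.natDegree + 1), q.coeff i * ((k.descFactorial i : ℝ) / d.descFactorial i)

theorem sum_bernsteinCoeff_mul_bernsteinPolynomial {q : ℝ[X]} {d : ℕ} (h : q.natDegree ≤ d) :
    ∑ k ∈ range (d + 1), C (bernsteinCoeff q d k) * bernsteinPolynomial ℝ d k = q := by
  conv_rhs => rw [q.as_sum_range_C_mul_X_pow]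
  simp only [bernsteinCoeff, map_sum, C_mul, sum_mul, mul_assoc]
  rw [sum_comm]
  refine sum_congr rfl fun i hi => ?_
  rw [← mul_sum, sum_descFactorial_div_mul_bernsteinPolynomial
    ((Nat.lt_succ_iff.1 (mem_range.1 hi)).trans h)]

theorem abs_bernsteinCoeff_sub_eval_le {q : ℝ[X]} {d k : ℕ} (hd : q.natDegree < d) (hk : k ≤ d) :
    |bernsteinCoeff q d k - q.eval ((k : ℝ) / d)| ≤
      (∑ i ∈ range (q.natDegree + 1), |q.coeff i|) * (q.natDegree * q.natDegree) /
        (d - q.natDegree) := by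
  set n := q.natDegree
  have hdn : (0 : ℝ) < d - n := sub_pos.2 (by exact_mod_cast hd)
  rw [eval_eq_sum_range, bernsteinCoeff, ← sum_sub_distrib, sum_mul, sum_div]
  refine (abs_sum_le_sum_abs _ _).trans (sum_le_sum fun i hi => ?_)
  have hin : i ≤ n := Nat.lt_succ_iff.1 (mem_range.1 hi)
  have hin' : (i : ℝ) ≤ n := by exact_mod_cast hin
  rw [← mul_sub, abs_mul, mul_div_assoc]
  gcongr
  calc _ ≤ (i : ℝ) * i / (d - i) := abs_descFactorial_div_sub_pow_le hk (hin.trans_lt hd)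
    _ ≤ n * n / (d - n) := by gcongr

def HasNonnegBernsteinCoeffs (p : ℝ[X]) (d : ℕ) : Prop :=
  ∃ β : ℕ → ℝ, (∀ k ≤ d, 0 ≤ β k) ∧
    p = ∑ k ∈ range (d + 1), C (β k) * bernsteinPolynomial ℝ d k

namespace HasNonnegBernsteinCoeffs

variable {q : ℝ[X]} {d : ℕ}

theorem X_mul (h : HasNonnegBernsteinCoeffs q d) : HasNonnegBernsteinCoeffs (X * q) (d + 1) := by
  obtain ⟨β, hβ, rfl⟩ := h
  -- at `k = 0` the factor `k / (d + 1)` vanishes, so the truncated `k - 1` does no harm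
  refine ⟨fun k => β (k - 1) * (k / (d + 1)), fun k hk => ?_, ?_⟩
  · rcases k with _ | k
    · simp
    · exact mul_nonneg (hβ k (by omega)) (by positivity)
  · rw [mul_sum, sum_range_succ' _ (d + 1)]
    simp only [Nat.cast_zero, zero_div, mul_zero, map_zero, zero_mul, add_zero, Nat.add_sub_cancel,
      Nat.cast_succ]
    refine sum_congr rfl fun k _ => ?_
    rw [mul_left_comm, X_mul_bernsteinPolynomial, ← mul_assoc, ← C_mul]

theorem one_sub_X_mul (h : HasNonnegBernsteinCoeffs q d) :
    HasNonnegBernsteinCoeffs ((1 - X) * q) (d + 1) := by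
  obtain ⟨β, hβ, rfl⟩ := h
  refine ⟨fun k => β k * ((d + 1 - k) / (d + 1)), fun k hk => ?_, ?_⟩
  · rcases Nat.of_le_succ hk with hk | rfl
    · have : (k : ℝ) ≤ d := by exact_mod_cast hk
      exact mul_nonneg (hβ k hk) (div_nonneg (by linarith) (by positivity))
    · simp
  · rw [mul_sum, sum_range_succ _ (d + 1)]
    simp only [Nat.cast_add, Nat.cast_one, sub_self, zero_div, mul_zero, map_zero, zero_mul,
      add_zero]
    refine sum_congr rfl fun k hk => ?_
    rw [mul_left_comm, one_sub_X_mul_bernsteinPolynomial (Nat.lt_succ_iff.1 (mem_range.1 hk)),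
      ← mul_assoc, ← C_mul]

end HasNonnegBernsteinCoeffs

theorem eventually_hasNonnegBernsteinCoeffs_of_pos_on_Icc {q : ℝ[X]}
    (hq : ∀ x ∈ Set.Icc (0 : ℝ) 1, 0 < q.eval x) :
    ∀ᶠ d in atTop, HasNonnegBernsteinCoeffs q d := by
  obtain ⟨x₀, hx₀, hmin⟩ := isCompact_Icc.exists_isMinOn (Set.nonempty_Icc.2 zero_le_one)
    q.continuous.continuousOn
  set n := q.natDegree
  set M := (∑ i ∈ range (n + 1), |q.coeff i|) * (n * n)
  have hM : Tendsto (fun d : ℕ => M / ((d : ℝ) - n)) atTop (𝓝 0) :=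
    tendsto_const_nhds.div_atTop (tendsto_atTop_add_const_right _ _ tendsto_natCast_atTop_atTop)
  filter_upwards [hM.eventually (gt_mem_nhds (hq x₀ hx₀)), eventually_gt_atTop n] with d hMd hnd
  refine ⟨bernsteinCoeff q d, fun k hk => ?_,
    (sum_bernsteinCoeff_mul_bernsteinPolynomial hnd.le).symm⟩
  have hkd : (k : ℝ) / d ∈ Set.Icc (0 : ℝ) 1 :=
    ⟨by positivity, div_le_one_of_le₀ (by exact_mod_cast hk) (Nat.cast_nonneg d)⟩
  have := (abs_le.1 (abs_bernsteinCoeff_sub_eval_le hnd hk)).1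
  linarith [isMinOn_iff.1 hmin _ hkd]

theorem pos_on_Icc_of_pos_on_Ioo {f : ℝ → ℝ} {a b : ℝ} (hf : Continuous f) (hab : a ≠ b)
    (hpos : ∀ x ∈ Set.Ioo a b, 0 < f x) (ha : f a ≠ 0) (hb : f b ≠ 0) :
    ∀ x ∈ Set.Icc a b, 0 < f x := by
  intro x hx
  have hnonneg : 0 ≤ f x :=
    closure_minimal (fun y hy => (hpos y hy).le) (isClosed_le continuous_const hf)
      (closure_Ioo hab ▸ hx)
  rcases Set.eq_endpoints_or_mem_Ioo_of_mem_Icc hx with rfl | rfl | hx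
  · exact hnonneg.lt_of_ne' ha
  · exact hnonneg.lt_of_ne' hb
  · exact hpos x hx

theorem eventually_atTop_of_imp_succ {P Q : ℕ → Prop} (hPQ : ∀ d, P d → Q (d + 1))
    (h : ∀ᶠ d in atTop, P d) : ∀ᶠ d in atTop, Q d := by
  rw [← map_add_atTop_eq_nat 1]
  exact eventually_map.2 (h.mono hPQ)

theorem eventually_hasNonnegBernsteinCoeffs_of_pos_on_Ioo {p : ℝ[X]}
    (hp : ∀ x ∈ Set.Ioo (0 : ℝ) 1, 0 < p.eval x) :
    ∀ᶠ d in atTop, HasNonnegBernsteinCoeffs p d := by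
  induction hn : p.natDegree using Nat.strong_induction_on generalizing p with
  | _ n ih =>
  have hp0 : p ≠ 0 := by
    rintro rfl
    simpa using hp (1 / 2) (by norm_num)
  by_cases h0 : p.eval 0 = 0
  · obtain ⟨q, rfl⟩ : X ∣ p := X_dvd_iff.2 (by rwa [coeff_zero_eq_eval_zero])
    have hq : ∀ x ∈ Set.Ioo (0 : ℝ) 1, 0 < q.eval x := fun x hx =>
      pos_of_mul_pos_right (by simpa using hp x hx) hx.1.le
    have hdeg : q.natDegree < n := by
      rw [← hn, natDegree_X_mul (right_ne_zero_of_mul hp0)]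
      exact Nat.lt_succ_self _
    exact eventually_atTop_of_imp_succ (fun _ => HasNonnegBernsteinCoeffs.X_mul) (ih _ hdeg hq rfl)
  by_cases h1 : p.eval 1 = 0
  · obtain ⟨q, rfl⟩ : 1 - X ∣ p := by
      simpa only [neg_sub, C_1] using neg_dvd.2 (dvd_iff_isRoot.2 h1)
    have hq : ∀ x ∈ Set.Ioo (0 : ℝ) 1, 0 < q.eval x := fun x hx =>
      pos_of_mul_pos_right (by simpa using hp x hx) (sub_nonneg.2 hx.2.le)
    have hdeg : q.natDegree < n := by
      have hdeg₁ : (1 - X : ℝ[X]).natDegree = 1 := by compute_degree!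
      rw [← hn, natDegree_mul (left_ne_zero_of_mul hp0) (right_ne_zero_of_mul hp0), hdeg₁]
      exact Nat.lt_one_add_iff.2 le_rfl
    exact eventually_atTop_of_imp_succ (fun _ => HasNonnegBernsteinCoeffs.one_sub_X_mul)
      (ih _ hdeg hq rfl)
  exact eventually_hasNonnegBernsteinCoeffs_of_pos_on_Icc
    (pos_on_Icc_of_pos_on_Ioo p.continuous zero_ne_one hp h0 h1)

theorem bernstein_coeffs_eventually_nonneg (p : Polynomial ℝ)
    (hpos : ∀ x ∈ Set.Ioo (0 : ℝ) 1, 0 < p.eval x) :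
    ∃ d₀ : ℕ, p.natDegree ≤ d₀ ∧ ∀ d, d₀ ≤ d → ∃ β : ℕ → ℝ,
      (∀ k ≤ d, 0 ≤ β k) ∧
      p = ∑ k ∈ Finset.range (d + 1), Polynomial.C (β k) * bernsteinPolynomial ℝ d k := by
  obtain ⟨N, hN⟩ := eventually_atTop.1 (eventually_hasNonnegBernsteinCoeffs_of_pos_on_Ioo hpos)
  exact ⟨max N p.natDegree, le_max_right _ _, fun d hd => hN d (le_of_max_le_left hd)⟩
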